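/- The Bohl spectrum of a Lyapunov sequence A : ℕ → GL_d(ℝ) is a nonempty disjoint union of at most d bounded intervals. -/

import Mathlib

open Filter Topology

noncomputable section

abbrev Euc (d : ℕ) := EuclideanSpace ℝ (Fin d)

/-- forward product `A(m+k-1) ⋯ A(m)` -/
def fwd {d : ℕ} (A : ℕ → (Euc d →L[ℝ] Euc d)) (m : ℕ) : ℕ → (Euc d →L[ℝ] Euc d)
  | 0 => 1
  | k + 1 => A (m + k) * fwd A m k

/-- backward product `Ainv(n) ⋯ Ainv(n+k-1)` -/
def bwd {d : ℕ} (Ainv : ℕ → (Euc d →L[ℝ] Euc d)) (n : ℕ) : ℕ → (Euc d →L[ℝ] Euc d)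
  | 0 => 1
  | k + 1 => bwd Ainv n k * Ainv (n + k)

/-- transition matrix Φ_A(n,m) -/
def Phi {d : ℕ} (A Ainv : ℕ → (Euc d →L[ℝ] Euc d)) (n m : ℕ) : Euc d →L[ℝ] Euc d :=
  if m ≤ n then fwd A m (n - m) else bwd Ainv n (m - n)

/-- A is a bounded sequence of invertible maps with bounded inverse sequence Ainv -/
def IsLyapunov {d : ℕ} (A Ainv : ℕ → (Euc d →L[ℝ] Euc d)) : Prop :=
  (∀ n, A n * Ainv n = 1) ∧ (∀ n, Ainv n * A n = 1) ∧
    BddAbove (Set.range fun n => ‖A n‖) ∧ BddAbove (Set.range fun n => ‖Ainv n‖)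

/-- `‖A‖_∞ = sup_n ‖A(n)‖` -/
def supNorm {d : ℕ} (A : ℕ → (Euc d →L[ℝ] Euc d)) : ℝ := ⨆ n, ‖A n‖

/-- solution `x(n,x₀) = Φ_A(n,0) x₀` -/
def sol {d : ℕ} (A : ℕ → (Euc d →L[ℝ] Euc d)) (n : ℕ) (x₀ : Euc d) : Euc d :=
  fwd A 0 n x₀

/-- `λ(n,m) = (1/(n-m)) ln (‖x(n,x₀)‖ / ‖x(m,x₀)‖)` -/
def lam {d : ℕ} (A : ℕ → (Euc d →L[ℝ] Euc d)) (n m : ℕ) (x₀ : Euc d) : ℝ :=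
  Real.log (‖sol A n x₀‖ / ‖sol A m x₀‖) / ((n : ℝ) - (m : ℝ))

/-- upper Bohl exponent of a subspace -/
def upperBohl {d : ℕ} (A : ℕ → (Euc d →L[ℝ] Euc d)) (L : Set (Euc d)) : ℝ :=
  ⨅ N : ℕ, sSup {r | ∃ n m : ℕ, ∃ x₀ : Euc d,
    N < n - m ∧ x₀ ∈ L ∧ x₀ ≠ 0 ∧ r = lam A n m x₀}

/-- lower Bohl exponent of a subspace -/
def lowerBohl {d : ℕ} (A : ℕ → (Euc d →L[ℝ] Euc d)) (L : Set (Euc d)) : ℝ :=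
  ⨆ N : ℕ, sInf {r | ∃ n m : ℕ, ∃ x₀ : Euc d,
    N < n - m ∧ x₀ ∈ L ∧ x₀ ≠ 0 ∧ r = lam A n m x₀}

/-- upper Bohl exponent of a vector -/
def upperBohlVec {d : ℕ} (A : ℕ → (Euc d →L[ℝ] Euc d)) (x₀ : Euc d) : ℝ :=
  ⨅ N : ℕ, sSup {r | ∃ n m : ℕ, N < n - m ∧ r = lam A n m x₀}

/-- lower Bohl exponent of a vector -/
def lowerBohlVec {d : ℕ} (A : ℕ → (Euc d →L[ℝ] Euc d)) (x₀ : Euc d) : ℝ :=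
  ⨆ N : ℕ, sInf {r | ∃ n m : ℕ, N < n - m ∧ r = lam A n m x₀}

/-- Bohl spectrum -/
def bohlSpectrum {d : ℕ} (A : ℕ → (Euc d →L[ℝ] Euc d)) : Set ℝ :=
  {γ | ∃ x₀ : Euc d, x₀ ≠ 0 ∧ γ ∈ Set.Icc (lowerBohlVec A x₀) (upperBohlVec A x₀)}

/-- the γ-shifted system `e^{-γ} A` -/
def shift {d : ℕ} (A : ℕ → (Euc d →L[ℝ] Euc d)) (γ : ℝ) : ℕ → (Euc d →L[ℝ] Euc d) :=
  fun n => Real.exp (-γ) • A n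

/-- Bohl dichotomy on a given pair of subspaces -/
def HasBohlDichotomyOn {d : ℕ} (A : ℕ → (Euc d →L[ℝ] Euc d))
    (L₁ L₂ : Submodule ℝ (Euc d)) : Prop :=
  ∃ α : ℝ, 0 < α ∧ ∃ C₁ C₂ : Euc d → ℝ, (∀ x, 0 < C₁ x) ∧ (∀ x, 0 < C₂ x) ∧
    (∀ x₀ ∈ L₁, ∀ m n : ℕ, m ≤ n →
      ‖sol A n x₀‖ ≤ C₁ x₀ * Real.exp (-α * ((n : ℝ) - (m : ℝ))) * ‖sol A m x₀‖) ∧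
    (∀ x₀ ∈ L₂, ∀ m n : ℕ, m ≤ n →
      C₂ x₀ * Real.exp (α * ((n : ℝ) - (m : ℝ))) * ‖sol A m x₀‖ ≤ ‖sol A n x₀‖)

/-- Bohl dichotomy -/
def HasBohlDichotomy {d : ℕ} (A : ℕ → (Euc d →L[ℝ] Euc d)) : Prop :=
  ∃ L₁ L₂ : Submodule ℝ (Euc d), IsCompl L₁ L₂ ∧ HasBohlDichotomyOn A L₁ L₂

/-- Bohl dichotomy spectrum -/
def bdSpectrum {d : ℕ} (A : ℕ → (Euc d →L[ℝ] Euc d)) : Set ℝ :=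
  {γ | ¬ HasBohlDichotomy (shift A γ)}

/-!
Fix `γ` outside the Bohl spectrum. Since `γ` never lies between the lower and the upper exponent
of a solution, and the lower exponent of `x + y` is at most the larger of the upper exponents of
`x` and `y`, the solutions with upper exponent below `γ` form a subspace `V γ`. Between two
order-connected components of the spectrum there is such a `γ`, and a solution realising a
spectral point above `γ` lies outside `V γ`; so the dimensions of these subspaces increase strictly
from one component to the next, and there are at most `d` components. All exponents lie in
`[-log K, log K]` for a common bound `K` of `‖A n‖` and `‖Ainv n‖`, so the spectrum is bounded.
-/

open Set Module Real

namespace Set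

variable {α : Type*} [LinearOrder α] {S : Set α} {a b : α}

theorem exists_notMem_between_ordConnectedComponent (ha : a ∈ ordConnectedSection S)
    (hb : b ∈ ordConnectedSection S) (hab : a < b) :
    ∃ γ ∉ S, (∀ x ∈ ordConnectedComponent S a, x < γ) ∧
      ∀ y ∈ ordConnectedComponent S b, γ < y := by
  obtain ⟨γ, hγab, hγS⟩ := not_subset.1 fun h : uIcc a b ⊆ S =>
    hab.ne (eq_of_mem_ordConnectedSection_of_uIcc_subset ha hb h)
  rw [uIcc_of_le hab.le] at hγab
  refine ⟨γ, hγS, fun x hx => ?_, fun y hy => ?_⟩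
  · by_contra! hxγ
    exact hγS (hx ⟨inf_le_left.trans hγab.1, hxγ.trans le_sup_right⟩)
  · by_contra! hyγ
    exact hγS (hy ⟨inf_le_right.trans hyγ, hγab.2.trans le_sup_left⟩)

theorem exists_notMem_between_of_mem_ordConnectedSection (ha : a ∈ ordConnectedSection S)
    (hb : b ∈ ordConnectedSection S) (hab : a < b) : ∃ γ ∉ S, a < γ ∧ γ < b := by
  obtain ⟨γ, hγS, ha', hb'⟩ := exists_notMem_between_ordConnectedComponent ha hb hab
  exact ⟨γ, hγS, ha' a (self_mem_ordConnectedComponent.2 (ordConnectedSection_subset ha)),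
    hb' b (self_mem_ordConnectedComponent.2 (ordConnectedSection_subset hb))⟩

theorem biUnion_ordConnectedSection_ordConnectedComponent :
    ⋃ x ∈ ordConnectedSection S, ordConnectedComponent S x = S := by
  refine Subset.antisymm (iUnion₂_subset fun _ _ => ordConnectedComponent_subset) fun x hx => ?_
  have hproj : ordConnectedProj S ⟨x, hx⟩ ∈ ordConnectedSection S := mem_range_self _
  exact mem_iUnion₂.2 ⟨_, hproj, mem_ordConnectedComponent_ordConnectedProj S ⟨x, hx⟩⟩

theorem exists_ordConnected_decomposition (hfin : (ordConnectedSection S).Finite) :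
    ∃ I : Fin (ordConnectedSection S).ncard → Set α, S = ⋃ i, I i ∧
      (∀ i, (I i).Nonempty ∧ I i ⊆ S ∧ (I i).OrdConnected) ∧
      ∀ i j, i < j → ∃ γ ∉ S, (∀ x ∈ I i, x < γ) ∧ ∀ y ∈ I j, γ < y := by
  set e := hfin.toFinset.orderIsoOfFin (ncard_eq_toFinset_card _ hfin).symm
  have he : ∀ i, (e i : α) ∈ ordConnectedSection S := fun i => hfin.mem_toFinset.1 (e i).2
  refine ⟨fun i => ordConnectedComponent S (e i), ?_, fun i => ⟨?_, ordConnectedComponent_subset,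
    inferInstance⟩, fun i j hij =>
    exists_notMem_between_ordConnectedComponent (he i) (he j) (e.strictMono hij)⟩
  · conv_lhs => rw [← biUnion_ordConnectedSection_ordConnectedComponent (S := S)]
    refine Subset.antisymm (iUnion₂_subset fun x hx => ?_)
      (iUnion_subset fun i => subset_biUnion_of_mem (he i))
    obtain ⟨i, hi⟩ := e.surjective ⟨x, hfin.mem_toFinset.2 hx⟩
    exact subset_iUnion_of_subset i (by rw [hi])
  · exact nonempty_ordConnectedComponent.2 (ordConnectedSection_subset (he i))

end Set

theorem abs_log_div_le_log {a b M : ℝ} (ha : 0 < a) (hb : 0 < b) (hab : a ≤ M * b)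
    (hba : b ≤ M * a) : |log (a / b)| ≤ log M := by
  have hM : 0 < M := pos_of_mul_pos_left (ha.trans_le hab) hb.le
  have h₁ := log_le_log ha hab
  have h₂ := log_le_log hb hba
  rw [log_mul hM.ne' hb.ne'] at h₁
  rw [log_mul hM.ne' ha.ne'] at h₂
  rw [log_div ha.ne' hb.ne', abs_sub_le_iff]
  constructor <;> linarith

variable {d : ℕ} {A Ainv : ℕ → (Euc d →L[ℝ] Euc d)} {x y : Euc d} {n : ℕ} {c r γ s : ℝ}

theorem sol_zero (A : ℕ → (Euc d →L[ℝ] Euc d)) (x : Euc d) : sol A 0 x = x := rfl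

theorem sol_succ (A : ℕ → (Euc d →L[ℝ] Euc d)) (n : ℕ) (x : Euc d) :
    sol A (n + 1) x = A n (sol A n x) := by
  simp [sol, fwd]

theorem sol_add (A : ℕ → (Euc d →L[ℝ] Euc d)) (n : ℕ) (x y : Euc d) :
    sol A n (x + y) = sol A n x + sol A n y :=
  map_add (fwd A 0 n) x y

theorem sol_smul (A : ℕ → (Euc d →L[ℝ] Euc d)) (n : ℕ) (k : ℝ) (x : Euc d) :
    sol A n (k • x) = k • sol A n x :=
  map_smul (fwd A 0 n) k x

theorem norm_sol_add_le_pow_mul {K : ℝ} (hK : ∀ n, ‖A n‖ ≤ K) (m k : ℕ) (x : Euc d) :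
    ‖sol A (m + k) x‖ ≤ K ^ k * ‖sol A m x‖ := by
  induction k with
  | zero => simp
  | succ k ih =>
    calc ‖sol A (m + (k + 1)) x‖ ≤ ‖A (m + k)‖ * ‖sol A (m + k) x‖ := by
          rw [← add_assoc, sol_succ]; exact (A (m + k)).le_opNorm _
      _ ≤ K * (K ^ k * ‖sol A m x‖) :=
          mul_le_mul (hK _) ih (norm_nonneg _) ((norm_nonneg _).trans (hK 0))
      _ = K ^ (k + 1) * ‖sol A m x‖ := by ring

theorem norm_sol_le_pow_mul_norm_sol_add (hinv : ∀ n y, Ainv n (A n y) = y) {K : ℝ}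
    (hK : ∀ n, ‖Ainv n‖ ≤ K) (m k : ℕ) (x : Euc d) :
    ‖sol A m x‖ ≤ K ^ k * ‖sol A (m + k) x‖ := by
  induction k with
  | zero => simp
  | succ k ih =>
    have hstep : ‖sol A (m + k) x‖ ≤ K * ‖sol A (m + (k + 1)) x‖ := by
      rw [← add_assoc, sol_succ]
      conv_lhs => rw [← hinv (m + k) (sol A (m + k) x)]
      exact (Ainv (m + k)).le_of_opNorm_le (hK _) _
    calc ‖sol A m x‖ ≤ K ^ k * ‖sol A (m + k) x‖ := ih
      _ ≤ K ^ k * (K * ‖sol A (m + (k + 1)) x‖) :=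
          mul_le_mul_of_nonneg_left hstep (pow_nonneg ((norm_nonneg _).trans (hK 0)) k)
      _ = K ^ (k + 1) * ‖sol A (m + (k + 1)) x‖ := by ring

theorem IsLyapunov.inv_apply_apply (hA : IsLyapunov A Ainv) (n : ℕ) (y : Euc d) :
    Ainv n (A n y) = y := by
  rw [← mul_apply_eq_comp, hA.2.1 n, one_apply_eq_self]

theorem IsLyapunov.exists_norm_le (hA : IsLyapunov A Ainv) :
    ∃ K, 1 ≤ K ∧ (∀ n, ‖A n‖ ≤ K) ∧ ∀ n, ‖Ainv n‖ ≤ K := by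
  obtain ⟨-, -, ⟨K₁, h₁⟩, ⟨K₂, h₂⟩⟩ := hA
  exact ⟨max 1 (max K₁ K₂), le_max_left _ _,
    fun n => (h₁ ⟨n, rfl⟩).trans (le_max_of_le_right (le_max_left _ _)),
    fun n => (h₂ ⟨n, rfl⟩).trans (le_max_of_le_right (le_max_right _ _))⟩

theorem IsLyapunov.norm_sol_pos (hA : IsLyapunov A Ainv) (hx : x ≠ 0) (n : ℕ) :
    0 < ‖sol A n x‖ := by
  obtain ⟨K, hK, -, hKinv⟩ := hA.exists_norm_le
  have h := norm_sol_le_pow_mul_norm_sol_add hA.inv_apply_apply hKinv 0 n x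
  rw [zero_add, sol_zero] at h
  exact pos_of_mul_pos_right ((norm_pos_iff.2 hx).trans_le h) (by positivity)

theorem IsLyapunov.exists_abs_lam_le (hA : IsLyapunov A Ainv) :
    ∃ c, ∀ x : Euc d, x ≠ 0 → ∀ n m, m < n → |lam A n m x| ≤ c := by
  obtain ⟨K, -, hKA, hKinv⟩ := hA.exists_norm_le
  refine ⟨log K, fun x hx n m hmn => ?_⟩
  obtain ⟨k, rfl⟩ := Nat.exists_eq_add_of_le hmn.le
  have hk : (0 : ℝ) < k := by exact_mod_cast Nat.pos_of_ne_zero (by omega)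
  have h := abs_log_div_le_log (hA.norm_sol_pos hx _) (hA.norm_sol_pos hx _)
    (norm_sol_add_le_pow_mul hKA m k x)
    (norm_sol_le_pow_mul_norm_sol_add hA.inv_apply_apply hKinv m k x)
  rw [log_pow] at h
  rw [lam, Nat.cast_add, add_sub_cancel_left, abs_div, Nat.abs_cast, div_le_iff₀ hk]
  linarith

def lamSet (A : ℕ → (Euc d →L[ℝ] Euc d)) (x : Euc d) (N : ℕ) : Set ℝ :=
  {r | ∃ n m : ℕ, N < n - m ∧ r = lam A n m x}

theorem upperBohlVec_eq_iInf : upperBohlVec A x = ⨅ N, sSup (lamSet A x N) := rfl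

theorem lowerBohlVec_eq_iSup : lowerBohlVec A x = ⨆ N, sInf (lamSet A x N) := rfl

theorem lam_mem_lamSet {N : ℕ} (h : N < n) : lam A n 0 x ∈ lamSet A x N := ⟨n, 0, h, rfl⟩

theorem lamSet_nonempty (N : ℕ) : (lamSet A x N).Nonempty := ⟨_, lam_mem_lamSet N.lt_succ_self⟩

section BoundedLam

variable (hc : ∀ n m, m < n → |lam A n m x| ≤ c)
include hc

theorem lamSet_subset_Icc (N : ℕ) : lamSet A x N ⊆ Icc (-c) c := by
  rintro _ ⟨n, m, h, rfl⟩
  exact abs_le.1 (hc n m (by omega))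

theorem bddAbove_lamSet (N : ℕ) : BddAbove (lamSet A x N) :=
  bddAbove_Icc.mono (lamSet_subset_Icc hc N)

theorem bddBelow_lamSet (N : ℕ) : BddBelow (lamSet A x N) :=
  bddBelow_Icc.mono (lamSet_subset_Icc hc N)

theorem upperBohlVec_le : upperBohlVec A x ≤ c := by
  rw [upperBohlVec_eq_iInf]
  have hbdd : BddBelow (range fun N => sSup (lamSet A x N)) := by
    refine ⟨-c, forall_mem_range.2 fun N => ?_⟩
    obtain ⟨r, hr⟩ := lamSet_nonempty (A := A) (x := x) N
    exact (lamSet_subset_Icc hc N hr).1.trans (le_csSup (bddAbove_lamSet hc N) hr)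
  exact ciInf_le_of_le hbdd 0
    (csSup_le (lamSet_nonempty 0) fun r hr => (lamSet_subset_Icc hc 0 hr).2)

theorem neg_le_lowerBohlVec : -c ≤ lowerBohlVec A x := by
  rw [lowerBohlVec_eq_iSup]
  have hbdd : BddAbove (range fun N => sInf (lamSet A x N)) := by
    refine ⟨c, forall_mem_range.2 fun N => ?_⟩
    obtain ⟨r, hr⟩ := lamSet_nonempty (A := A) (x := x) N
    exact (csInf_le (bddBelow_lamSet hc N) hr).trans (lamSet_subset_Icc hc N hr).2
  exact le_ciSup_of_le hbdd 0
    (le_csInf (lamSet_nonempty 0) fun r hr => (lamSet_subset_Icc hc 0 hr).1)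

theorem eventually_lam_lt (h : upperBohlVec A x < r) : ∀ᶠ n in atTop, lam A n 0 x < r := by
  rw [upperBohlVec_eq_iInf] at h
  obtain ⟨N, hN⟩ := exists_lt_of_ciInf_lt h
  filter_upwards [eventually_gt_atTop N] with n hn
  exact (le_csSup (bddAbove_lamSet hc N) (lam_mem_lamSet hn)).trans_lt hN

theorem lowerBohlVec_le_of_frequently (h : ∃ᶠ n in atTop, lam A n 0 x ≤ r) :
    lowerBohlVec A x ≤ r := by
  rw [lowerBohlVec_eq_iSup]
  refine ciSup_le fun N => ?_
  obtain ⟨n, hr, hn⟩ := (h.and_eventually (eventually_gt_atTop N)).exists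
  exact (csInf_le (bddBelow_lamSet hc N) (lam_mem_lamSet hn)).trans hr

theorem lowerBohlVec_le_upperBohlVec : lowerBohlVec A x ≤ upperBohlVec A x :=
  le_of_forall_gt_imp_ge_of_dense fun _ hr =>
    lowerBohlVec_le_of_frequently hc ((eventually_lam_lt hc hr).mono fun _ h => h.le).frequently

end BoundedLam

theorem lam_smul {k : ℝ} (hk : k ≠ 0) (n m : ℕ) : lam A n m (k • x) = lam A n m x := by
  simp only [lam, sol_smul, norm_smul, mul_div_mul_left _ _ (norm_ne_zero_iff.2 hk)]

theorem upperBohlVec_smul {k : ℝ} (hk : k ≠ 0) : upperBohlVec A (k • x) = upperBohlVec A x := by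
  simp only [upperBohlVec, lam_smul hk]

theorem lam_zero_right (A : ℕ → (Euc d →L[ℝ] Euc d)) (n : ℕ) (x : Euc d) :
    lam A n 0 x = log (‖sol A n x‖ / ‖x‖) / n := by
  simp [lam, sol_zero]

theorem lam_le_of_norm_sol_le {M : ℝ} (hpos : 0 < ‖sol A n x‖) (hx : x ≠ 0) (hn : 0 < n)
    (hM : 0 < M) (h : ‖sol A n x‖ ≤ M * exp (r * n)) :
    lam A n 0 x ≤ r + log (M / ‖x‖) / n := by
  have hn' : (0 : ℝ) < n := Nat.cast_pos.2 hn
  have hlog := log_le_log hpos h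
  rw [log_mul hM.ne' (exp_pos _).ne', log_exp] at hlog
  have hx' : ‖x‖ ≠ 0 := norm_ne_zero_iff.2 hx
  rw [lam_zero_right, log_div hpos.ne' hx', log_div hM.ne' hx', div_le_iff₀ hn', add_mul,
    div_mul_cancel₀ _ hn'.ne']
  linarith

theorem norm_sol_le_of_lam_le (hx : x ≠ 0) (hn : 0 < n) (h : lam A n 0 x ≤ r) :
    ‖sol A n x‖ ≤ ‖x‖ * exp (r * n) := by
  rw [lam_zero_right, div_le_iff₀ (Nat.cast_pos.2 hn)] at h
  rcases (norm_nonneg (sol A n x)).eq_or_lt with h0 | hpos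
  · rw [← h0]; positivity
  · rw [← div_le_iff₀' (norm_pos_iff.2 hx)]
    exact (log_le_iff_le_exp (by positivity)).1 h

theorem IsLyapunov.lowerBohlVec_add_le (hA : IsLyapunov A Ainv) (hx : x ≠ 0) (hy : y ≠ 0)
    (hxy : x + y ≠ 0) : lowerBohlVec A (x + y) ≤ max (upperBohlVec A x) (upperBohlVec A y) := by
  obtain ⟨c, hc⟩ := hA.exists_abs_lam_le
  refine le_of_forall_gt_imp_ge_of_dense fun r hr => ?_
  obtain ⟨q, hq, hqr⟩ := exists_between hr
  rw [max_lt_iff] at hq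
  set M := ‖x‖ + ‖y‖
  have hM : 0 < M := by positivity
  have hsmall : ∀ᶠ n : ℕ in atTop, log (M / ‖x + y‖) / n ≤ r - q :=
    (tendsto_const_div_atTop_nhds_zero_nat _).eventually (ge_mem_nhds (sub_pos.2 hqr))
  refine lowerBohlVec_le_of_frequently (hc _ hxy) (Eventually.frequently ?_)
  filter_upwards [eventually_lam_lt (hc x hx) hq.1, eventually_lam_lt (hc y hy) hq.2, hsmall,
    eventually_gt_atTop 0] with n hnx hny hnM hn
  have hsum : ‖sol A n (x + y)‖ ≤ M * exp (q * n) := by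
    calc ‖sol A n (x + y)‖ ≤ ‖sol A n x‖ + ‖sol A n y‖ := by rw [sol_add]; exact norm_add_le _ _
      _ ≤ ‖x‖ * exp (q * n) + ‖y‖ * exp (q * n) :=
          add_le_add (norm_sol_le_of_lam_le hx hn hnx.le) (norm_sol_le_of_lam_le hy hn hny.le)
      _ = M * exp (q * n) := by ring
  linarith [lam_le_of_norm_sol_le (hA.norm_sol_pos hxy n) hxy hn hM hsum]

theorem upperBohlVec_lt_of_notMem_bohlSpectrum (hγ : γ ∉ bohlSpectrum A) (hx : x ≠ 0)
    (h : lowerBohlVec A x ≤ γ) : upperBohlVec A x < γ :=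
  lt_of_not_ge fun h' => hγ ⟨x, hx, h, h'⟩

/-- For `γ` outside the Bohl spectrum this is `{0} ∪ {x | upperBohlVec A x < γ}`
(`IsLyapunov.upperBohlVec_lt_of_mem_slowSpace`); the span makes it a subspace for every `γ`. -/
def slowSpace (A : ℕ → (Euc d →L[ℝ] Euc d)) (γ : ℝ) : Submodule ℝ (Euc d) :=
  Submodule.span ℝ {x | x ≠ 0 ∧ lowerBohlVec A x ≤ γ}

theorem slowSpace_mono : Monotone (slowSpace A) := fun _ _ h =>
  Submodule.span_mono fun _ hx => ⟨hx.1, hx.2.trans h⟩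

theorem slowSpace_ne_bot (hs : s ∈ bohlSpectrum A) : slowSpace A s ≠ ⊥ := by
  obtain ⟨x, hx, hlow, -⟩ := hs
  exact fun h => hx ((Submodule.eq_bot_iff _).1 h x (Submodule.subset_span ⟨hx, hlow⟩))

theorem IsLyapunov.upperBohlVec_lt_of_mem_slowSpace (hA : IsLyapunov A Ainv)
    (hγ : γ ∉ bohlSpectrum A) (hx : x ∈ slowSpace A γ) (hx0 : x ≠ 0) : upperBohlVec A x < γ := by
  suffices ∀ x ∈ slowSpace A γ, x = 0 ∨ upperBohlVec A x < γ from (this x hx).resolve_left hx0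
  intro x hx
  induction hx using Submodule.span_induction with
  | mem x hx => exact Or.inr (upperBohlVec_lt_of_notMem_bohlSpectrum hγ hx.1 hx.2)
  | zero => exact Or.inl rfl
  | add x y _ _ hx hy =>
    rcases eq_or_ne x 0 with rfl | hx0
    · simpa using hy
    rcases eq_or_ne y 0 with rfl | hy0
    · simpa using hx
    rcases eq_or_ne (x + y) 0 with hxy | hxy
    · exact Or.inl hxy
    refine Or.inr (upperBohlVec_lt_of_notMem_bohlSpectrum hγ hxy ?_)
    exact (hA.lowerBohlVec_add_le hx0 hy0 hxy).trans
      (max_le (hx.resolve_left hx0).le (hy.resolve_left hy0).le)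
  | smul k x _ hx =>
    rcases eq_or_ne k 0 with rfl | hk
    · simp
    rw [upperBohlVec_smul hk, smul_eq_zero]
    exact hx.imp Or.inr id

theorem IsLyapunov.slowSpace_lt (hA : IsLyapunov A Ainv) (hγ : γ ∉ bohlSpectrum A)
    (hs : s ∈ bohlSpectrum A) (hγs : γ < s) : slowSpace A γ < slowSpace A s := by
  obtain ⟨x, hx, hlow, hup⟩ := hs
  refine SetLike.lt_iff_le_and_exists.2 ⟨slowSpace_mono hγs.le, x,
    Submodule.subset_span ⟨hx, hlow⟩, fun hmem => ?_⟩
  exact (hA.upperBohlVec_lt_of_mem_slowSpace hγ hmem hx).not_ge (hγs.le.trans hup)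

theorem IsLyapunov.strictMonoOn_finrank_slowSpace (hA : IsLyapunov A Ainv) :
    StrictMonoOn (fun s => finrank ℝ (slowSpace A s)) (ordConnectedSection (bohlSpectrum A)) := by
  intro a ha b hb hab
  obtain ⟨γ, hγ, haγ, hγb⟩ := exists_notMem_between_of_mem_ordConnectedSection ha hb hab
  exact Submodule.finrank_lt_finrank_of_lt
    ((slowSpace_mono haγ.le).trans_lt (hA.slowSpace_lt hγ (ordConnectedSection_subset hb) hγb))

theorem IsLyapunov.finite_ordConnectedSection_bohlSpectrum (hA : IsLyapunov A Ainv) :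
    (ordConnectedSection (bohlSpectrum A)).Finite ∧
      (ordConnectedSection (bohlSpectrum A)).ncard ≤ d := by
  have hmaps : MapsTo (fun s => finrank ℝ (slowSpace A s)) (ordConnectedSection (bohlSpectrum A))
      (Icc 1 d) := fun s hs =>
    ⟨Submodule.one_le_finrank_iff.2 (slowSpace_ne_bot (ordConnectedSection_subset hs)),
      (Submodule.finrank_le _).trans finrank_euclideanSpace_fin.le⟩
  have hinj := hA.strictMonoOn_finrank_slowSpace.injOn
  refine ⟨(finite_Icc 1 d).of_injOn hmaps hinj, ?_⟩
  simpa using ncard_le_ncard_of_injOn _ hmaps hinj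

theorem IsLyapunov.isBounded_bohlSpectrum (hA : IsLyapunov A Ainv) :
    Bornology.IsBounded (bohlSpectrum A) := by
  obtain ⟨c, hc⟩ := hA.exists_abs_lam_le
  refine (Metric.isBounded_Icc (-c) c).subset ?_
  rintro γ ⟨x, hx, hlow, hup⟩
  exact ⟨(neg_le_lowerBohlVec (hc x hx)).trans hlow, hup.trans (upperBohlVec_le (hc x hx))⟩

theorem IsLyapunov.bohlSpectrum_nonempty (hA : IsLyapunov A Ainv) (hd : 0 < d) :
    (bohlSpectrum A).Nonempty := by
  have : Nontrivial (Euc d) := Module.nontrivial_of_finrank_pos (R := ℝ) (by simpa using hd)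
  obtain ⟨c, hc⟩ := hA.exists_abs_lam_le
  obtain ⟨x, hx⟩ := exists_ne (0 : Euc d)
  exact ⟨_, x, hx, le_rfl, lowerBohlVec_le_upperBohlVec (hc x hx)⟩

theorem stmt14 {d : ℕ} (hd : 0 < d) (A Ainv : ℕ → (Euc d →L[ℝ] Euc d))
    (hA : IsLyapunov A Ainv) :
    ∃ ℓ : ℕ, 1 ≤ ℓ ∧ ℓ ≤ d ∧ ∃ I : Fin ℓ → Set ℝ,
      bohlSpectrum A = ⋃ i, I i ∧
      (∀ i, (I i).Nonempty ∧ Bornology.IsBounded (I i) ∧ (I i).OrdConnected) ∧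
      (∀ i j : Fin ℓ, i < j → ∀ x ∈ I i, ∀ y ∈ I j, x < y) ∧
      (∀ i j : Fin ℓ, i < j → ∃ γ, γ ∉ bohlSpectrum A ∧
        (∀ x ∈ I i, x ≤ γ) ∧ (∀ y ∈ I j, γ ≤ y)) := by
  obtain ⟨hfin, hcard⟩ := hA.finite_ordConnectedSection_bohlSpectrum
  obtain ⟨I, hunion, hI, hgap⟩ := exists_ordConnected_decomposition hfin
  obtain ⟨s, hs⟩ := hA.bohlSpectrum_nonempty hd
  have hpos : 0 < (ordConnectedSection (bohlSpectrum A)).ncard :=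
    (ncard_pos hfin).2 ⟨_, mem_range_self ⟨s, hs⟩⟩
  refine ⟨_, hpos, hcard, I, hunion, fun i => ⟨(hI i).1,
    hA.isBounded_bohlSpectrum.subset (hI i).2.1, (hI i).2.2⟩, fun i j hij x hx y hy => ?_,
    fun i j hij => ?_⟩
  · obtain ⟨γ, -, hxγ, hγy⟩ := hgap i j hij
    exact (hxγ x hx).trans (hγy y hy)
  · obtain ⟨γ, hγ, hxγ, hγy⟩ := hgap i j hij
    exact ⟨γ, hγ, fun x hx => (hxγ x hx).le, fun y hy => (hγy y hy).le⟩
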